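/- For any single-qubit quantum channel 𝒩 in normal form with Pauli transfer matrix having first row (1,0,0,0), first column (1,t₁,t₂,t₃)ᵀ, and diagonal block diag(λ₁,λ₂,λ₃), complete positivity and trace preservation imply (1/3)(t₁² + t₂² + t₃² + λ₁² + λ₂² + λ₃²) ≤ 1, with equality if and only if 𝒩 is a unitary channel. -/

import Mathlib

namespace Stmt18
open ComplexOrder

/-- The single-qubit Pauli matrices `I, X, Y, Z`. -/
noncomputable def pauliMat : Fin 4 → Matrix (Fin 2) (Fin 2) ℂ
  | 0 => !![1, 0; 0, 1]
  | 1 => !![0, 1; 1, 0]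
  | 2 => !![0, -Complex.I; Complex.I, 0]
  | 3 => !![1, 0; 0, -1]

/-- The extension `id_R ⊗ Φ` of a linear map on matrices by a reference system `R`. -/
def matExt {B C R : Type*} [Fintype B] [Fintype C] [Fintype R]
    (Φ : Matrix B B ℂ →ₗ[ℂ] Matrix C C ℂ)
    (M : Matrix (R × B) (R × B) ℂ) : Matrix (R × C) (R × C) ℂ :=
  Matrix.of fun p q => Φ (Matrix.of fun b b' => M (p.1, b) (q.1, b')) p.2 q.2

/-- Complete positivity: every extension `id ⊗ Φ` by a finite reference system
maps positive semidefinite matrices to positive semidefinite matrices. -/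
def IsCompletelyPositive
    (Φ : Matrix (Fin 2) (Fin 2) ℂ →ₗ[ℂ] Matrix (Fin 2) (Fin 2) ℂ) : Prop :=
  ∀ (m : ℕ) (M : Matrix (Fin m × Fin 2) (Fin m × Fin 2) ℂ),
    M.PosSemidef → (matExt Φ M).PosSemidef

lemma pauli_expand (M : Matrix (Fin 2) (Fin 2) ℂ) :
    M = (1/2 : ℂ) • ((pauliMat 0 * M).trace • pauliMat 0 + (pauliMat 1 * M).trace • pauliMat 1
      + (pauliMat 2 * M).trace • pauliMat 2 + (pauliMat 3 * M).trace • pauliMat 3) := by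
  ext i j
  fin_cases i <;> fin_cases j <;>
    simp [pauliMat, Matrix.trace, Matrix.mul_apply, Fin.sum_univ_two, Matrix.diag] <;>
    ring_nf <;> simp [Complex.I_sq] <;> ring

lemma pauli_zero_eq_one : pauliMat 0 = 1 := by
  ext i j; fin_cases i <;> fin_cases j <;> simp [pauliMat, Matrix.one_apply]

lemma mul_std_mul_apply (K : Matrix (Fin 2) (Fin 2) ℂ) (i k a c : Fin 2) :
    (K * Matrix.single i k (1:ℂ) * Matrix.conjTranspose K) a c
      = K a i * (starRingEnd ℂ) (K c k) := by
  simp only [Matrix.mul_apply, Matrix.single, Matrix.conjTranspose_apply,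
    Fin.sum_univ_two, Matrix.of_apply]
  fin_cases i <;> fin_cases k <;> simp

lemma sum_sq_le_sq_sum {n : Type*} [Fintype n] (μ : n → ℝ) (h : ∀ i, 0 ≤ μ i) :
    ∑ i, μ i ^ 2 ≤ (∑ i, μ i) ^ 2 := by
  calc ∑ i, μ i ^ 2 = ∑ i, μ i * μ i := by simp [sq]
    _ ≤ ∑ i, μ i * (∑ j, μ j) := Finset.sum_le_sum fun i _ =>
        mul_le_mul_of_nonneg_left (Finset.single_le_sum (fun j _ => h j) (Finset.mem_univ i)) (h i)
    _ = (∑ i, μ i) ^ 2 := by rw [← Finset.sum_mul, sq]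

lemma psd_struct {n : Type*} [Fintype n] [DecidableEq n] {J : Matrix n n ℂ}
    (hJ : J.PosSemidef) :
    ∃ (μ : n → ℝ) (U : Matrix n n ℂ),
      (∀ i, 0 ≤ μ i) ∧
      J.trace = ((∑ i, μ i : ℝ) : ℂ) ∧
      (J * J).trace = ((∑ i, (μ i) ^ 2 : ℝ) : ℂ) ∧
      (∀ p q, J p q = ∑ j, (μ j : ℂ) * (U p j * (starRingEnd ℂ) (U q j))) := by
  have hH := hJ.1
  set μ := hH.eigenvalues with hμ
  set U := (Matrix.IsHermitian.eigenvectorUnitary hH : Matrix n n ℂ) with hUdef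
  have hU : star U * U = 1 :=
    Matrix.mem_unitaryGroup_iff'.mp (Matrix.IsHermitian.eigenvectorUnitary hH).2
  have hspec : J = U * Matrix.diagonal (RCLike.ofReal ∘ μ) * star U := hH.spectral_theorem
  refine ⟨μ, U, hJ.eigenvalues_nonneg, ?_, ?_, ?_⟩
  · rw [hspec, Matrix.trace_mul_cycle, hU, one_mul, Matrix.trace_diagonal]
    push_cast
    rfl
  · have : J * J = U * Matrix.diagonal (fun i => ((μ i : ℂ)) ^ 2) * star U := by
      rw [hspec]
      rw [show ∀ (D : Matrix n n ℂ), U * D * star U * (U * D * star U)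
          = U * (D * (star U * U) * D) * star U from fun D => by noncomm_ring, hU]
      congr 1
      · congr 1
        rw [mul_one, Matrix.diagonal_mul_diagonal]
        congr 1
        ext i
        simp [sq]
    rw [this, Matrix.trace_mul_cycle, hU, one_mul, Matrix.trace_diagonal]
    push_cast
    rfl
  · intro p q
    conv_lhs => rw [hspec]
    rw [Matrix.mul_apply]
    congr 1
    ext j
    rw [Matrix.mul_diagonal]
    simp [Matrix.star_apply, Function.comp]
    ring

/-- a single-qubit channel whose Pauli transfer matrix is in the
King–Ruskai normal form with translation vector `(t₁,t₂,t₃)` and diagonal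
`(λ₁,λ₂,λ₃)` satisfies `(1/3)(t₁²+t₂²+t₃²+λ₁²+λ₂²+λ₃²) ≤ 1`, with equality iff
the channel is unitary. -/
theorem stmt18
    (Φ : Matrix (Fin 2) (Fin 2) ℂ →ₗ[ℂ] Matrix (Fin 2) (Fin 2) ℂ)
    (hCP : IsCompletelyPositive Φ)
    (hTP : ∀ M, (Φ M).trace = M.trace)
    (t l : Fin 3 → ℝ)
    -- the Pauli transfer matrix `T_{PQ} = Tr[P·Φ(Q)]/2` is in normal form:
    (hrow : ∀ a : Fin 3, (pauliMat 0 * Φ (pauliMat a.succ)).trace = 0)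
    (hcol : ∀ a : Fin 3, (pauliMat a.succ * Φ (pauliMat 0)).trace = 2 * (t a : ℂ))
    (hdiag : ∀ a : Fin 3, (pauliMat a.succ * Φ (pauliMat a.succ)).trace = 2 * (l a : ℂ))
    (hoff : ∀ a b : Fin 3, a ≠ b →
      (pauliMat a.succ * Φ (pauliMat b.succ)).trace = 0) :
    (1 / 3 : ℝ) * ((∑ a, t a ^ 2) + ∑ a, l a ^ 2) ≤ 1
      ∧ ((1 / 3 : ℝ) * ((∑ a, t a ^ 2) + ∑ a, l a ^ 2) = 1 ↔
          ∃ U ∈ Matrix.unitaryGroup (Fin 2) ℂ,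
            ∀ ρ, Φ ρ = U * ρ * Matrix.conjTranspose U) := by
  have htr0 : ∀ M : Matrix (Fin 2) (Fin 2) ℂ, (pauliMat 0 * M).trace = M.trace := by
    intro M; rw [pauli_zero_eq_one, one_mul]
  have hI : Φ (pauliMat 0) = pauliMat 0 + (t 0 : ℂ) • pauliMat 1
      + (t 1 : ℂ) • pauliMat 2 + (t 2 : ℂ) • pauliMat 3 := by
    conv_lhs => rw [pauli_expand (Φ (pauliMat 0))]
    rw [htr0, hTP]
    have h0 : (pauliMat 0).trace = 2 := by
      norm_num [pauliMat, Matrix.trace, Matrix.diag, Fin.sum_univ_two]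
    rw [h0, show pauliMat (1:Fin 4) = pauliMat ((0:Fin 3).succ) from rfl,
      show pauliMat (2:Fin 4) = pauliMat ((1:Fin 3).succ) from rfl,
      show pauliMat (3:Fin 4) = pauliMat ((2:Fin 3).succ) from rfl,
      hcol 0, hcol 1, hcol 2]
    module
  have hX : Φ (pauliMat 1) = (l 0 : ℂ) • pauliMat 1 := by
    conv_lhs => rw [show pauliMat (1:Fin 4) = pauliMat ((0:Fin 3).succ) from rfl,
      pauli_expand (Φ (pauliMat ((0:Fin 3).succ)))]
    rw [hrow 0, show pauliMat (1:Fin 4) = pauliMat ((0:Fin 3).succ) from rfl,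
      show pauliMat (2:Fin 4) = pauliMat ((1:Fin 3).succ) from rfl,
      show pauliMat (3:Fin 4) = pauliMat ((2:Fin 3).succ) from rfl,
      hdiag 0, hoff 1 0 (by decide), hoff 2 0 (by decide)]
    module
  have hY : Φ (pauliMat 2) = (l 1 : ℂ) • pauliMat 2 := by
    conv_lhs => rw [show pauliMat (2:Fin 4) = pauliMat ((1:Fin 3).succ) from rfl,
      pauli_expand (Φ (pauliMat ((1:Fin 3).succ)))]
    rw [hrow 1, show pauliMat (1:Fin 4) = pauliMat ((0:Fin 3).succ) from rfl,
      show pauliMat (2:Fin 4) = pauliMat ((1:Fin 3).succ) from rfl,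
      show pauliMat (3:Fin 4) = pauliMat ((2:Fin 3).succ) from rfl,
      hdiag 1, hoff 0 1 (by decide), hoff 2 1 (by decide)]
    module
  have hZ : Φ (pauliMat 3) = (l 2 : ℂ) • pauliMat 3 := by
    conv_lhs => rw [show pauliMat (3:Fin 4) = pauliMat ((2:Fin 3).succ) from rfl,
      pauli_expand (Φ (pauliMat ((2:Fin 3).succ)))]
    rw [hrow 2, show pauliMat (1:Fin 4) = pauliMat ((0:Fin 3).succ) from rfl,
      show pauliMat (2:Fin 4) = pauliMat ((1:Fin 3).succ) from rfl,
      show pauliMat (3:Fin 4) = pauliMat ((2:Fin 3).succ) from rfl,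
      hdiag 2, hoff 0 2 (by decide), hoff 1 2 (by decide)]
    module
  -- values on standard basis matrices
  have hs00 : Φ (Matrix.single 0 0 1) = (1/2:ℂ) •
      !![1+(t 2:ℂ)+(l 2:ℂ), (t 0:ℂ) - (t 1:ℂ)*Complex.I;
         (t 0:ℂ)+(t 1:ℂ)*Complex.I, 1-(t 2:ℂ)-(l 2:ℂ)] := by
    rw [show (Matrix.single 0 0 (1:ℂ)) = (1/2:ℂ) • (pauliMat 0 + pauliMat 3) from by
      ext i j; fin_cases i <;> fin_cases j <;>
        simp [pauliMat, Matrix.single] <;> norm_num,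
      map_smul, map_add, hI, hZ]
    ext i j; fin_cases i <;> fin_cases j <;> simp [pauliMat] <;> ring
  have hs11 : Φ (Matrix.single 1 1 1) = (1/2:ℂ) •
      !![1+(t 2:ℂ)-(l 2:ℂ), (t 0:ℂ) - (t 1:ℂ)*Complex.I;
         (t 0:ℂ)+(t 1:ℂ)*Complex.I, 1-(t 2:ℂ)+(l 2:ℂ)] := by
    rw [show (Matrix.single 1 1 (1:ℂ)) = (1/2:ℂ) • (pauliMat 0 - pauliMat 3) from by
      ext i j; fin_cases i <;> fin_cases j <;>
        simp [pauliMat, Matrix.single] <;> norm_num,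
      map_smul, map_sub, hI, hZ]
    ext i j; fin_cases i <;> fin_cases j <;> simp [pauliMat] <;> ring
  have hs01 : Φ (Matrix.single 0 1 1) = (1/2:ℂ) •
      !![0, (l 0:ℂ)+(l 1:ℂ); (l 0:ℂ)-(l 1:ℂ), 0] := by
    rw [show (Matrix.single 0 1 (1:ℂ)) = (1/2:ℂ) • (pauliMat 1 + Complex.I • pauliMat 2) from by
      ext i j; fin_cases i <;> fin_cases j <;>
        simp [pauliMat, Matrix.single] <;> norm_num [Complex.ext_iff],
      map_smul, map_add, map_smul, hX, hY]
    ext i j; fin_cases i <;> fin_cases j <;> simp [pauliMat] <;> ring_nf <;>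
      simp [Complex.I_sq] <;> ring
  have hs10 : Φ (Matrix.single 1 0 1) = (1/2:ℂ) •
      !![0, (l 0:ℂ)-(l 1:ℂ); (l 0:ℂ)+(l 1:ℂ), 0] := by
    rw [show (Matrix.single 1 0 (1:ℂ)) = (1/2:ℂ) • (pauliMat 1 - Complex.I • pauliMat 2) from by
      ext i j; fin_cases i <;> fin_cases j <;>
        simp [pauliMat, Matrix.single] <;> norm_num [Complex.ext_iff],
      map_smul, map_sub, map_smul, hX, hY]
    ext i j; fin_cases i <;> fin_cases j <;> simp [pauliMat] <;> ring_nf <;>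
      simp [Complex.I_sq] <;> ring
  -- the Choi matrix
  set B : Matrix (Fin 1) (Fin 2 × Fin 2) ℂ :=
    Matrix.of fun _ p => if p.1 = p.2 then 1 else 0 with hB
  set J : Matrix (Fin 2 × Fin 2) (Fin 2 × Fin 2) ℂ :=
    matExt Φ (Matrix.conjTranspose B * B) with hJdef
  have hJpsd : J.PosSemidef := hCP 2 _ (Matrix.posSemidef_conjTranspose_mul_self B)
  have hJentry : ∀ i a k c : Fin 2, J ((i,a)) ((k,c)) = Φ (Matrix.single i k 1) a c := by
    intro i a k c
    have hmat : (Matrix.of fun b b' => (Matrix.conjTranspose B * B) (i,b) (k,b'))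
        = Matrix.single i k (1:ℂ) := by
      ext b b'
      simp only [Matrix.of_apply, Matrix.mul_apply, Matrix.conjTranspose_apply, hB,
        Matrix.single, Fintype.sum_prod_type, Fin.sum_univ_two]
      fin_cases i <;> fin_cases k <;> fin_cases b <;> fin_cases b' <;> simp
    show Φ (Matrix.of fun b b' => (Matrix.conjTranspose B * B) (i,b) (k,b')) a c = _
    rw [hmat]
  have htrJ : J.trace = 2 := by
    simp only [Matrix.trace, Matrix.diag, Fintype.sum_prod_type, Fin.sum_univ_two,
      hJentry, hs00, hs11]
    norm_num
    ring
  have htrJJ : (J * J).trace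
      = (((1 + (t 0^2 + t 1^2 + t 2^2) + (l 0^2 + l 1^2 + l 2^2)) : ℝ) : ℂ) := by
    simp only [Matrix.trace, Matrix.diag, Matrix.mul_apply, Fintype.sum_prod_type,
      Fin.sum_univ_two, hJentry, hs00, hs01, hs10, hs11]
    push_cast
    simp
    ring_nf
    simp [Complex.I_sq]
  -- spectral decomposition of the Choi matrix
  obtain ⟨μ, U0, hμ0, hμtr, hμtr2, hJform⟩ := psd_struct hJpsd
  have hsum : ∑ i, μ i = 2 := by exact_mod_cast hμtr.symm.trans htrJ
  have hsumsq : ∑ i, (μ i)^2 = 1 + (t 0^2 + t 1^2 + t 2^2) + (l 0^2 + l 1^2 + l 2^2) := by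
    exact_mod_cast hμtr2.symm.trans htrJJ
  have hineq : ∑ i, (μ i)^2 ≤ 4 := by
    have := sum_sq_le_sq_sum μ hμ0
    rw [hsum] at this
    linarith
  constructor
  · rw [Fin.sum_univ_three, Fin.sum_univ_three]
    linarith [hsumsq, hineq]
  constructor
  · -- equality implies unitary
    intro heq
    rw [Fin.sum_univ_three, Fin.sum_univ_three] at heq
    have h4 : ∑ i, (μ i)^2 = 4 := by rw [hsumsq]; linarith
    have hle : ∀ i, μ i ≤ 2 := fun i =>
      hsum ▸ Finset.single_le_sum (fun j _ => hμ0 j) (Finset.mem_univ i)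
    have hz : ∑ i, μ i * (2 - μ i) = 0 := by
      have : ∑ i, μ i * (2 - μ i) = 2 * (∑ i, μ i) - ∑ i, (μ i)^2 := by
        rw [Finset.mul_sum, ← Finset.sum_sub_distrib]
        exact Finset.sum_congr rfl fun i _ => by ring
      rw [this, hsum, h4]; ring
    have hprod0 : ∀ i, μ i * (2 - μ i) = 0 := fun i =>
      (Finset.sum_eq_zero_iff_of_nonneg (fun i _ =>
        mul_nonneg (hμ0 i) (by linarith [hle i]))).mp hz i (Finset.mem_univ i)
    have hex : ∃ k, μ k ≠ 0 := by
      by_contra h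
      push_neg at h
      rw [Finset.sum_eq_zero (fun i _ => h i)] at hsum
      norm_num at hsum
    obtain ⟨k, hk⟩ := hex
    have hk2 : μ k = 2 := by
      rcases mul_eq_zero.mp (hprod0 k) with h | h
      · exact absurd h hk
      · linarith
    have hj0 : ∀ j, j ≠ k → μ j = 0 := by
      intro j hj
      by_contra hne
      have hj2 : μ j = 2 := by
        rcases mul_eq_zero.mp (hprod0 j) with h | h
        · exact absurd h hne
        · linarith
      have hsub : ∑ i ∈ ({k, j} : Finset _), μ i ≤ ∑ i, μ i :=
        Finset.sum_le_sum_of_subset_of_nonneg (Finset.subset_univ _) (fun i _ _ => hμ0 i)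
      rw [Finset.sum_pair (Ne.symm hj), hsum, hk2, hj2] at hsub
      linarith
    -- extract rank-one structure
    set v : Fin 2 × Fin 2 → ℂ := fun p => ((Real.sqrt 2 : ℝ) : ℂ) * U0 p k with hv
    have h22 : ((Real.sqrt 2 : ℝ) : ℂ) * ((Real.sqrt 2 : ℝ) : ℂ) = 2 := by
      rw [← Complex.ofReal_mul, Real.mul_self_sqrt (by norm_num)]
      norm_num
    have hJv : ∀ p q, J p q = v p * (starRingEnd ℂ) (v q) := by
      intro p q
      rw [hJform p q, Finset.sum_eq_single k]
      · rw [hk2, hv]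
        simp only [map_mul, Complex.conj_ofReal]
        rw [show ((2:ℝ):ℂ) = 2 from by norm_num] 
        rw [← h22]
        ring
      · intro j _ hjk
        rw [hj0 j hjk]
        simp
      · intro h
        exact absurd (Finset.mem_univ k) h
    set K : Matrix (Fin 2) (Fin 2) ℂ := Matrix.of fun a i => v (i, a) with hKdef
    have hstdK : ∀ i k' : Fin 2, Φ (Matrix.single i k' 1)
        = K * Matrix.single i k' 1 * Matrix.conjTranspose K := by
      intro i k'
      ext a c
      rw [mul_std_mul_apply, ← hJentry i a k' c, hJv]
      simp [hKdef]
    have hKall : ∀ M, Φ M = K * M * Matrix.conjTranspose K := by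
      intro M
      calc Φ M = Φ (∑ i, ∑ j, Matrix.single i j (M i j)) := by
            rw [← Matrix.matrix_eq_sum_single M]
        _ = ∑ i, ∑ j, M i j • Φ (Matrix.single i j 1) := by
            rw [map_sum]
            refine Finset.sum_congr rfl fun i _ => ?_
            rw [map_sum]
            refine Finset.sum_congr rfl fun j _ => ?_
            rw [show Matrix.single i j (M i j) = M i j • Matrix.single i j (1:ℂ)
              from by rw [Matrix.smul_single, smul_eq_mul, mul_one], map_smul]
        _ = ∑ i, ∑ j, M i j • (K * Matrix.single i j 1 * Matrix.conjTranspose K) := by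
            refine Finset.sum_congr rfl fun i _ => Finset.sum_congr rfl fun j _ => ?_
            rw [hstdK]
        _ = K * M * Matrix.conjTranspose K := by
            conv_rhs => rw [Matrix.matrix_eq_sum_single M]
            rw [Matrix.mul_sum, Matrix.sum_mul]
            refine Finset.sum_congr rfl fun i _ => ?_
            rw [Matrix.mul_sum, Matrix.sum_mul]
            refine Finset.sum_congr rfl fun j _ => ?_
            rw [show Matrix.single i j (M i j) = M i j • Matrix.single i j (1:ℂ)
              from by rw [Matrix.smul_single, smul_eq_mul, mul_one]]
            rw [Matrix.mul_smul, Matrix.smul_mul]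
    have hKU : Matrix.conjTranspose K * K = 1 := by
      ext x y
      have h := hTP (Matrix.single y x 1)
      rw [hKall] at h
      have htr : (K * Matrix.single y x (1:ℂ) * Matrix.conjTranspose K).trace
          = ∑ a, K a y * (starRingEnd ℂ) (K a x) := by
        simp only [Matrix.trace, Matrix.diag, mul_std_mul_apply]
      rw [htr] at h
      by_cases hxy : x = y
      · subst hxy
        rw [Matrix.trace_single_eq_same] at h
        rw [Matrix.one_apply_eq]
        rw [Matrix.mul_apply]
        rw [← h]
        refine Finset.sum_congr rfl fun a _ => ?_
        simp [Matrix.conjTranspose_apply]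
        ring
      · rw [Matrix.trace_single_eq_of_ne y x (1:ℂ) (Ne.symm hxy)] at h
        rw [Matrix.one_apply_ne (fun hc => hxy hc)]
        rw [Matrix.mul_apply]
        rw [← h]
        refine Finset.sum_congr rfl fun a _ => ?_
        simp [Matrix.conjTranspose_apply]
        ring
    exact ⟨K, Matrix.mem_unitaryGroup_iff'.mpr hKU, hKall⟩
  · -- unitary implies equality
    rintro ⟨U, hUmem, hρ⟩
    have hJU : ∀ (i a k c : Fin 2), J ((i,a)) ((k,c)) = U a i * (starRingEnd ℂ) (U c k) := by
      intro i a k c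
      rw [hJentry, hρ, mul_std_mul_apply]
    have hUU : (star U * U).trace = 2 := by
      rw [Matrix.mem_unitaryGroup_iff'.mp hUmem, Matrix.trace_one]
      norm_num
    have h2 : U 0 0 * (starRingEnd ℂ) (U 0 0) + U 1 0 * (starRingEnd ℂ) (U 1 0)
        + (U 0 1 * (starRingEnd ℂ) (U 0 1) + U 1 1 * (starRingEnd ℂ) (U 1 1)) = 2 := by
      rw [← hUU]
      simp only [Matrix.trace, Matrix.diag, Matrix.mul_apply, Matrix.star_apply,
        Fin.sum_univ_two]
      ring_nf
      rfl
    have h4c : (J * J).trace = 4 := by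
      simp only [Matrix.trace, Matrix.diag, Matrix.mul_apply, Fintype.sum_prod_type,
        Fin.sum_univ_two, hJU]
      linear_combination (U 0 0 * (starRingEnd ℂ) (U 0 0) + U 1 0 * (starRingEnd ℂ) (U 1 0)
        + (U 0 1 * (starRingEnd ℂ) (U 0 1) + U 1 1 * (starRingEnd ℂ) (U 1 1)) + 2) * h2
    have : ((1 + (t 0^2 + t 1^2 + t 2^2) + (l 0^2 + l 1^2 + l 2^2) : ℝ) : ℂ) = 4 :=
      htrJJ.symm.trans h4c
    have hS : 1 + (t 0^2 + t 1^2 + t 2^2) + (l 0^2 + l 1^2 + l 2^2) = 4 := by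
      exact_mod_cast this
    rw [Fin.sum_univ_three, Fin.sum_univ_three]
    linear_combination (1/3 : ℝ) * hS

end Stmt18
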